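/- Let g(x) = (x - x_1)···(x - x_m) be a monic polynomial of degree m with roots x_1,...,x_m, and let C be its companion matrix (with C(i, j) = 1 if i = j+1 for j ≤ m-1, C(i, m) = (-1)^{m-i} e_{m-i+1}(x_1,...,x_m), and all other entries 0). Then for all t ≥ 0 and all 1 ≤ i, j ≤ m: if t + j - m ≥ 1, then C^t(i, j) = (-1)^{m-i} s_{(t+j-m, 1,...,1 with m-i ones)}(x_1,...,x_m); and if t + j - m < 1, then C^t(i, j) = 1 if i = t + j and 0 otherwise. -/

import Mathlib

/-- Semistandard Young tableaux of hook shape `(k, 1^ℓ)` on the alphabet `{1,...,m}`. -/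
abbrev HookSSYT (m k ℓ : ℕ) : Type :=
  {p : (Fin k → Fin m) × (Fin ℓ → Fin m) //
    Monotone p.1 ∧ StrictMono p.2 ∧
    ∀ (h0 : 0 < k) (h1 : 0 < ℓ), p.1 ⟨0, h0⟩ < p.2 ⟨0, h1⟩}

/-- The Schur polynomial of the hook shape `(k, 1^ℓ)` in `m` variables. -/
noncomputable def hookSchur (R : Type*) [CommRing R] (m k ℓ : ℕ) (x : Fin m → R) : R :=
  ∑ᶠ T : HookSSYT m k ℓ, (∏ i, x (T.1.1 i)) * ∏ j, x (T.1.2 j)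

/-- The elementary symmetric polynomial `e_ℓ` in the variables `x_1, ..., x_m`. -/
noncomputable def esymmF (R : Type*) [CommRing R] (m : ℕ) (x : Fin m → R) (ℓ : ℕ) : R :=
  ∑ S ∈ Finset.univ.powersetCard ℓ, ∏ i ∈ S, x i

/-!
Row-expanding `C * A` shows that the entries of `C ^ (t + 1)` obey a first-order recursion in `t`,
and that `(C ^ t) i j` depends only on `t + j`. Below the threshold `t + j = m` the powers just
shift the standard basis vectors; at the threshold the last column of `C` appears, whose entries are
`± e_{m-i} = ± s_{(1, 1^{m-1-i})}`; beyond it the recursion is exactly Pieri's rule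
`h_a e_{b+1} = s_{(a, 1^{b+1})} + s_{(a+1, 1^b)}`, together with the vanishing of hook Schur
polynomials with a leg of length `≥ m`.
-/

theorem Fin.monotone_cons {n : ℕ} {α : Type*} [Preorder α] {a : α} {f : Fin n → α}
    (ha : ∀ j, a ≤ f j) (hf : Monotone f) : Monotone (Fin.cons a f : Fin (n + 1) → α) :=
  monotone_iff_forall_lt.2 <|
    (Fin.liftFun_cons (· ≤ ·)).2 ⟨ha, fun _ _ h => hf h.le⟩

namespace HookSSYT

variable {m k ℓ : ℕ}

def row (T : HookSSYT m k ℓ) : Fin k → Fin m := T.1.1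

def col (T : HookSSYT m k ℓ) : Fin ℓ → Fin m := T.1.2

theorem row_monotone (T : HookSSYT m k ℓ) : Monotone T.row := T.2.1

theorem col_strictMono (T : HookSSYT m k ℓ) : StrictMono T.col := T.2.2.1

theorem row_zero_lt_col_zero (T : HookSSYT m k ℓ) (hk : 0 < k) (hℓ : 0 < ℓ) :
    T.row ⟨0, hk⟩ < T.col ⟨0, hℓ⟩ := T.2.2.2 hk hℓ

@[ext]
theorem ext {T T' : HookSSYT m k ℓ} (hrow : T.row = T'.row) (hcol : T.col = T'.col) : T = T' :=
  Subtype.ext (Prod.ext hrow hcol)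

noncomputable instance : Fintype (HookSSYT m k ℓ) := Fintype.ofFinite _

variable {R : Type*} [CommRing R]

def weight (x : Fin m → R) (T : HookSSYT m k ℓ) : R := (∏ i, x (T.row i)) * ∏ j, x (T.col j)

theorem row_zero_lt_col (T : HookSSYT m k ℓ) (hk : 0 < k) (j : Fin ℓ) :
    T.row ⟨0, hk⟩ < T.col j :=
  (T.row_zero_lt_col_zero hk j.pos).trans_le
    (T.col_strictMono.monotone (Fin.mk_le_of_le_val j.val.zero_le))

def rowOneEquivColumn : HookSSYT m 1 ℓ ≃ HookSSYT m 0 (ℓ + 1) where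
  toFun T := ⟨(Fin.elim0, Fin.cons (T.row 0) T.col), fun i => i.elim0,
    Fin.strictMono_cons.2 ⟨T.row_zero_lt_col one_pos, T.col_strictMono⟩,
    fun h => absurd h (lt_irrefl 0)⟩
  invFun T := ⟨(fun _ => T.col 0, Fin.tail T.col), monotone_const,
    T.col_strictMono.comp (Fin.strictMono_succ), fun _ _ => T.col_strictMono (Fin.succ_pos _)⟩
  left_inv T := ext (funext fun i => by rw [Subsingleton.elim i 0]; rfl)
    (Fin.tail_cons (α := fun _ => Fin m) (T.row 0) T.col)
  right_inv T := ext (funext fun i => i.elim0) (Fin.cons_self_tail (α := fun _ => Fin m) T.col)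

theorem weight_rowOneEquivColumn (x : Fin m → R) (T : HookSSYT m 1 ℓ) :
    (rowOneEquivColumn T).weight x = T.weight x := by
  change (∏ i : Fin 0, x (Fin.elim0 i)) *
    ∏ j, x (Fin.cons (α := fun _ => Fin m) (T.row 0) T.col j) = _
  simp [weight, Fin.prod_univ_succ]

variable {a : ℕ}

/- Pieri's rule for `h_a e_{b+1}`: a row `r` and a column `c` with `r₀ < c₀` already form a
hook tableau of shape `(a, 1^{b+1})`; otherwise `c₀ ≤ r₀`, and moving `c₀` to the front of the
row gives one of shape `(a + 1, 1^b)`. -/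

def pieriLtEquiv (ha : 0 < a) (b : ℕ) :
    {p : HookSSYT m a 0 × HookSSYT m 0 (b + 1) // p.1.row ⟨0, ha⟩ < p.2.col 0} ≃
      HookSSYT m a (b + 1) where
  toFun p := ⟨(p.1.1.row, p.1.2.col), p.1.1.row_monotone, p.1.2.col_strictMono,
    fun _ _ => p.2⟩
  invFun T := ⟨(⟨(T.row, Fin.elim0), T.row_monotone, fun i => i.elim0,
      fun _ h => absurd h (lt_irrefl 0)⟩,
    ⟨(Fin.elim0, T.col), fun i => i.elim0, T.col_strictMono,
      fun h => absurd h (lt_irrefl 0)⟩), T.row_zero_lt_col_zero ha b.succ_pos⟩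
  left_inv _ := Subtype.ext (Prod.ext (ext rfl (funext fun i => i.elim0))
    (ext (funext fun i => i.elim0) rfl))
  right_inv _ := rfl

theorem weight_pieriLtEquiv (x : Fin m → R) (ha : 0 < a) (b : ℕ) (p) :
    (pieriLtEquiv ha b p).weight x = p.1.1.weight x * p.1.2.weight x := by
  change (∏ i, x (p.1.1.row i)) * ∏ j, x (p.1.2.col j) =
    ((∏ i, x (p.1.1.row i)) * ∏ j : Fin 0, x (p.1.1.col j)) *
      ((∏ i : Fin 0, x (p.1.2.row i)) * ∏ j, x (p.1.2.col j))
  simp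

def pieriGeEquiv (ha : 0 < a) (b : ℕ) :
    {p : HookSSYT m a 0 × HookSSYT m 0 (b + 1) // ¬ p.1.row ⟨0, ha⟩ < p.2.col 0} ≃
      HookSSYT m (a + 1) b where
  toFun p := ⟨(Fin.cons (p.1.2.col 0) p.1.1.row, Fin.tail p.1.2.col),
    Fin.monotone_cons
      (fun j => (not_lt.mp p.2).trans (p.1.1.row_monotone (Fin.mk_le_of_le_val j.val.zero_le)))
      p.1.1.row_monotone,
    p.1.2.col_strictMono.comp Fin.strictMono_succ,
    fun _ _ => p.1.2.col_strictMono (Fin.succ_pos _)⟩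
  invFun T := ⟨(⟨(Fin.tail T.row, Fin.elim0), T.row_monotone.comp Fin.strictMono_succ.monotone,
      fun i => i.elim0, fun _ h => absurd h (lt_irrefl 0)⟩,
    ⟨(Fin.elim0, Fin.cons (T.row 0) T.col), fun i => i.elim0,
      Fin.strictMono_cons.2 ⟨T.row_zero_lt_col a.succ_pos, T.col_strictMono⟩,
      fun h => absurd h (lt_irrefl 0)⟩),
    not_lt.mpr (T.row_monotone (Fin.zero_le _))⟩
  left_inv p := Subtype.ext (Prod.ext
    (ext (Fin.tail_cons (α := fun _ => Fin m) (p.1.2.col 0) p.1.1.row) (funext fun i => i.elim0))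
    (ext (funext fun i => i.elim0) (Fin.cons_self_tail (α := fun _ => Fin m) p.1.2.col)))
  right_inv T := ext (Fin.cons_self_tail (α := fun _ => Fin m) T.row)
    (Fin.tail_cons (α := fun _ => Fin m) (T.row 0) T.col)

theorem weight_pieriGeEquiv (x : Fin m → R) (ha : 0 < a) (b : ℕ) (p) :
    (pieriGeEquiv ha b p).weight x = p.1.1.weight x * p.1.2.weight x := by
  change (∏ i, x (Fin.cons (α := fun _ => Fin m) (p.1.2.col 0) p.1.1.row i)) *
      ∏ j, x (Fin.tail p.1.2.col j) =
    ((∏ i, x (p.1.1.row i)) * ∏ j : Fin 0, x (p.1.1.col j)) *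
      ((∏ i : Fin 0, x (p.1.2.row i)) * ∏ j, x (p.1.2.col j))
  simp [Fin.prod_univ_succ, Fin.tail]
  ring

end HookSSYT

section

variable {R : Type*} [CommRing R] {m : ℕ} (x : Fin m → R)

theorem hookSchur_eq_sum_weight (k ℓ : ℕ) :
    hookSchur R m k ℓ x = ∑ T : HookSSYT m k ℓ, T.weight x :=
  finsum_eq_sum_of_fintype _

theorem hookSchur_eq_zero_of_le {k ℓ : ℕ} (hk : 0 < k) (hℓ : m ≤ ℓ) :
    hookSchur R m k ℓ x = 0 := by
  suffices IsEmpty (HookSSYT m k ℓ) from finsum_of_isEmpty _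
  refine ⟨fun T => ?_⟩
  have hcard := Finset.card_le_card_of_injOn T.col (s := Finset.univ)
    (t := Finset.Ioi (T.row ⟨0, hk⟩)) (fun j _ => Finset.mem_Ioi.2 (T.row_zero_lt_col hk j))
    T.col_strictMono.injective.injOn
  simp only [Finset.card_univ, Fintype.card_fin, Fin.card_Ioi] at hcard
  omega

theorem hookSchur_zero_eq_esymmF (ℓ : ℕ) : hookSchur R m 0 ℓ x = esymmF R m x ℓ := by
  rw [hookSchur_eq_sum_weight, esymmF]
  refine Finset.sum_bij (fun T _ => Finset.univ.map ⟨T.col, T.col_strictMono.injective⟩)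
    (fun T _ => by simp [Finset.mem_powersetCard]) (fun T _ T' _ h => ?_) (fun S hS => ?_)
    (fun T _ => by simp [HookSSYT.weight, Finset.prod_map])
  · refine HookSSYT.ext (funext fun i => i.elim0)
      ((T.col_strictMono.range_inj T'.col_strictMono).mp ?_)
    simpa using congrArg (fun s : Finset (Fin m) => (s : Set (Fin m))) h
  · have hcard := (Finset.mem_powersetCard.mp hS).2
    refine ⟨⟨(Fin.elim0, S.orderEmbOfFin hcard), fun i => i.elim0,
      (S.orderEmbOfFin hcard).strictMono, fun h0 => absurd h0 (lt_irrefl 0)⟩,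
      Finset.mem_univ _, ?_⟩
    exact S.map_orderEmbOfFin_univ hcard

theorem hookSchur_one_eq_esymmF (ℓ : ℕ) : hookSchur R m 1 ℓ x = esymmF R m x (ℓ + 1) := by
  rw [← hookSchur_zero_eq_esymmF, hookSchur_eq_sum_weight, hookSchur_eq_sum_weight]
  exact Fintype.sum_equiv HookSSYT.rowOneEquivColumn _ _ fun T =>
    (T.weight_rowOneEquivColumn x).symm

theorem hookSchur_mul_esymmF {a : ℕ} (ha : 0 < a) (b : ℕ) :
    hookSchur R m a 0 x * esymmF R m x (b + 1) =
      hookSchur R m a (b + 1) x + hookSchur R m (a + 1) b x := by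
  rw [← hookSchur_zero_eq_esymmF]
  simp only [hookSchur_eq_sum_weight, Finset.sum_mul_sum, ← Fintype.sum_prod_type']
  rw [← Fintype.sum_subtype_add_sum_subtype
    (fun p : HookSSYT m a 0 × HookSSYT m 0 (b + 1) => p.1.row ⟨0, ha⟩ < p.2.col 0)]
  congr 1
  · exact Fintype.sum_equiv (HookSSYT.pieriLtEquiv ha b) _ _ fun p =>
      (HookSSYT.weight_pieriLtEquiv x ha b p).symm
  · exact Fintype.sum_equiv (HookSSYT.pieriGeEquiv ha b) _ _ fun p =>
      (HookSSYT.weight_pieriGeEquiv x ha b p).symm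

theorem Matrix.companion_mul_apply (c : Fin m → R) {C : Matrix (Fin m) (Fin m) R}
    (hC : ∀ i j : Fin m, C i j =
      if (i : ℕ) = (j : ℕ) + 1 then 1 else if (j : ℕ) = m - 1 then c i else 0)
    (A : Matrix (Fin m) (Fin m) R) (i j : Fin m) :
    (C * A) i j = c i * A ⟨m - 1, Nat.sub_one_lt_of_lt i.isLt⟩ j +
      if 0 < (i : ℕ) then A ⟨(i : ℕ) - 1, (Nat.sub_le _ _).trans_lt i.isLt⟩ j else 0 := by
  have hrow : ∀ k, C i k = (if k = ⟨m - 1, Nat.sub_one_lt_of_lt i.isLt⟩ then c i else 0) +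
      if (i : ℕ) = (k : ℕ) + 1 then 1 else 0 := by
    intro k
    rw [hC]
    split_ifs <;> simp_all [Fin.ext_iff]
    omega
  simp only [Matrix.mul_apply, hrow, add_mul, Finset.sum_add_distrib, ite_mul, zero_mul, one_mul,
    Finset.sum_ite_eq', Finset.mem_univ, if_true]
  congr 1
  split_ifs with hi
  · rw [Fintype.sum_eq_single ⟨(i : ℕ) - 1, (Nat.sub_le _ _).trans_lt i.isLt⟩
      (fun k hk => if_neg (by simp [Fin.ext_iff] at hk; omega)), if_pos (by simp; omega)]
  · exact Finset.sum_eq_zero fun k _ => if_neg (by omega)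

noncomputable def companionPowCol (x : Fin m → R) (s i : ℕ) : R :=
  if m ≤ s then (-1) ^ (m - 1 - i) * hookSchur R m (s + 1 - m) (m - 1 - i) x
  else if i = s then 1 else 0

theorem companionPowCol_succ_of_lt {s i : ℕ} (hs : s + 1 < m) :
    companionPowCol x (s + 1) i =
      (-1) ^ (m - 1 - i) * esymmF R m x (m - i) * companionPowCol x s (m - 1) +
        if 0 < i then companionPowCol x s (i - 1) else 0 := by
  simp only [companionPowCol, if_neg (show ¬m ≤ s + 1 by omega), if_neg (show ¬m ≤ s by omega),
    if_neg (show m - 1 ≠ s by omega), mul_zero, zero_add]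
  split_ifs <;> first | rfl | omega

theorem companionPowCol_succ_of_eq {s i : ℕ} (hs : s + 1 = m) (hi : i < m) :
    companionPowCol x (s + 1) i =
      (-1) ^ (m - 1 - i) * esymmF R m x (m - i) * companionPowCol x s (m - 1) +
        if 0 < i then companionPowCol x s (i - 1) else 0 := by
  simp only [companionPowCol, if_pos (show m ≤ s + 1 by omega), if_neg (show ¬m ≤ s by omega),
    if_pos (show m - 1 = s by omega), show s + 1 + 1 - m = 1 by omega, hookSchur_one_eq_esymmF,
    show m - 1 - i + 1 = m - i by omega, mul_one]
  rw [ite_eq_right_iff.mpr fun _ => if_neg (by omega), add_zero]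

theorem companionPowCol_succ_of_le {s i : ℕ} (hs : m ≤ s) (hi : i < m) :
    companionPowCol x (s + 1) i =
      (-1) ^ (m - 1 - i) * esymmF R m x (m - i) * companionPowCol x s (m - 1) +
        if 0 < i then companionPowCol x s (i - 1) else 0 := by
  have ha : 0 < s + 1 - m := by omega
  -- at `i = 0` the missing entry is played by the hook `s_{(a, 1^m)}`, which vanishes
  have hshift : (if 0 < i then companionPowCol x s (i - 1) else 0) =
      (-1) ^ (m - i) * hookSchur R m (s + 1 - m) (m - i) x := by
    split_ifs with hi0
    · simp only [companionPowCol, if_pos hs, show m - 1 - (i - 1) = m - i by omega]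
    · rw [show m - i = m by omega, hookSchur_eq_zero_of_le x ha le_rfl, mul_zero]
  have hpieri := hookSchur_mul_esymmF x ha (m - 1 - i)
  rw [show m - 1 - i + 1 = m - i by omega] at hpieri
  have hsign : (-1 : R) ^ (m - i) = -(-1) ^ (m - 1 - i) := by
    rw [show m - i = m - 1 - i + 1 by omega, pow_succ, mul_neg_one]
  rw [hshift, hsign]
  simp only [companionPowCol, if_pos hs, if_pos (show m ≤ s + 1 by omega),
    show s + 1 + 1 - m = s + 1 - m + 1 by omega, Nat.sub_self, pow_zero, one_mul]
  linear_combination -(-1 : R) ^ (m - 1 - i) * hpieri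

theorem companionPowCol_succ (s : ℕ) {i : ℕ} (hi : i < m) :
    companionPowCol x (s + 1) i =
      (-1) ^ (m - 1 - i) * esymmF R m x (m - i) * companionPowCol x s (m - 1) +
        if 0 < i then companionPowCol x s (i - 1) else 0 := by
  rcases lt_trichotomy (s + 1) m with hs | hs | hs
  · exact companionPowCol_succ_of_lt x hs
  · exact companionPowCol_succ_of_eq x hs hi
  · exact companionPowCol_succ_of_le x (by omega) hi

theorem companion_pow_apply {C : Matrix (Fin m) (Fin m) R}
    (hC : ∀ i j : Fin m, C i j =
      if (i : ℕ) = (j : ℕ) + 1 then 1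
      else if (j : ℕ) = m - 1 then (-1) ^ (m - 1 - (i : ℕ)) * esymmF R m x (m - (i : ℕ))
      else 0)
    (t : ℕ) (i j : Fin m) : (C ^ t) i j = companionPowCol x (t + j) i := by
  induction t generalizing i j with
  | zero =>
    simp [companionPowCol, Matrix.one_apply, Fin.ext_iff]
  | succ t ih =>
    rw [pow_succ', Matrix.companion_mul_apply _ hC, show t + 1 + (j : ℕ) = t + j + 1 by ring,
      companionPowCol_succ x _ i.isLt]
    simp only [ih]

end

/-- Indices here are 0-based: the entry `C^t(i,j)` of the paper (1-based) is
`(C ^ t) ⟨i-1⟩ ⟨j-1⟩` here. -/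
theorem companion_pow_schur_general (m : ℕ) (x : Fin m → ℂ)
    (C : Matrix (Fin m) (Fin m) ℂ)
    (hC : ∀ i j : Fin m, C i j =
      if (i : ℕ) = (j : ℕ) + 1 then 1
      else if (j : ℕ) = m - 1 then
        (-1 : ℂ) ^ (m - 1 - (i : ℕ)) * esymmF ℂ m x (m - (i : ℕ))
      else 0)
    (t : ℕ) (i j : Fin m) :
    (m ≤ t + (j : ℕ) →
      (C ^ t) i j =
        (-1 : ℂ) ^ (m - 1 - (i : ℕ)) *
          hookSchur ℂ m (t + (j : ℕ) + 1 - m) (m - 1 - (i : ℕ)) x) ∧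
    (t + (j : ℕ) < m →
      (C ^ t) i j = if (i : ℕ) = t + (j : ℕ) then 1 else 0) := by
  rw [companion_pow_apply x hC t i j, companionPowCol]
  exact ⟨fun h => if_pos h, fun h => if_neg (not_le.mpr h)⟩

/-- Powers of the companion matrix of `g(x) = (x - x_1) ⋯ (x - x_m)` are (up to sign)
hook Schur polynomials in the roots.  Indices here are 0-based: the entry `C^t(i,j)`
of the paper (1-based) is `(C ^ t) ⟨i-1⟩ ⟨j-1⟩` here. -/
theorem companion_pow_schur (m : ℕ) (hm : 1 ≤ m) (x : Fin m → ℂ)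
    (C : Matrix (Fin m) (Fin m) ℂ)
    (hC : ∀ i j : Fin m, C i j =
      if (i : ℕ) = (j : ℕ) + 1 then 1
      else if (j : ℕ) = m - 1 then
        (-1 : ℂ) ^ (m - 1 - (i : ℕ)) * esymmF ℂ m x (m - (i : ℕ))
      else 0)
    (t : ℕ) (i j : Fin m) :
    (m ≤ t + (j : ℕ) →
      (C ^ t) i j =
        (-1 : ℂ) ^ (m - 1 - (i : ℕ)) *
          hookSchur ℂ m (t + (j : ℕ) + 1 - m) (m - 1 - (i : ℕ)) x) ∧
    (t + (j : ℕ) < m →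
      (C ^ t) i j = if (i : ℕ) = t + (j : ℕ) then 1 else 0) :=
  companion_pow_schur_general m x C hC t i j
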